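/- arXiv:0901.1324 — 3 statements merged into one kernel-verified Lean document; each statement's English description precedes it below -/
import Mathlib

section
/- For the back-and-forth bridge dealing deck D'_bf = (NESWWSEN)^6 NESW (a function from {1,...,52} to {N,E,S,W} following the pattern NESWWSEN repeated 6 times followed by NESW), one has Z(D'_bf, u, v) = 1 for every pair u < v in the order N < E < S < W. -/
open scoped Classical

/-- `W D u v`: number of u-v digraphs minus number of v-u digraphs in deck `D`. -/
noncomputable def Wdig {n : ℕ} {V : Type*} (D : Fin n → V) (u v : V) : ℤ :=
  ((Finset.univ.filter
      (fun i : Fin n => ∃ h : i.1 + 1 < n, D i = u ∧ D ⟨i.1 + 1, h⟩ = v)).card : ℤ) -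
  ((Finset.univ.filter
      (fun i : Fin n => ∃ h : i.1 + 1 < n, D i = v ∧ D ⟨i.1 + 1, h⟩ = u)).card : ℤ)

/-- `Z D u v`: number of u-v pairs minus number of v-u pairs in deck `D`. -/
noncomputable def Zpair {n : ℕ} {V : Type*} (D : Fin n → V) (u v : V) : ℤ :=
  ((Finset.univ.filter
      (fun p : Fin n × Fin n => p.1 < p.2 ∧ D p.1 = u ∧ D p.2 = v)).card : ℤ) -
  ((Finset.univ.filter
      (fun p : Fin n × Fin n => p.1 < p.2 ∧ D p.1 = v ∧ D p.2 = u)).card : ℤ)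

def ZpairC {n : ℕ} {V : Type*} [DecidableEq V] (D : Fin n → V) (u v : V) : ℤ :=
  ((Finset.univ.filter
      (fun p : Fin n × Fin n => p.1 < p.2 ∧ D p.1 = u ∧ D p.2 = v)).card : ℤ) -
  ((Finset.univ.filter
      (fun p : Fin n × Fin n => p.1 < p.2 ∧ D p.1 = v ∧ D p.2 = u)).card : ℤ)

lemma Zpair_eq_ZpairC {n : ℕ} {V : Type*} [DecidableEq V] (D : Fin n → V) (u v : V) :
    Zpair D u v = ZpairC D u v := by
  unfold Zpair ZpairC
  congr!

set_option maxRecDepth 100000 in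
/-- For back-and-forth bridge dealing `(NESWWSEN)^6 NESW`
(players `0 = N < 1 = E < 2 = S < 3 = W`), `Z(D'_bf, u, v) = 1` for every `u < v`. -/
theorem Z_back_and_forth_bridge (u v : Fin 4) (huv : u < v) :
    Zpair (fun i : Fin 52 =>
        (if h : i.1 % 8 < 4 then (⟨i.1 % 8, by omega⟩ : Fin 4)
          else ⟨7 - i.1 % 8, by omega⟩)) u v = 1 := by
  rw [Zpair_eq_ZpairC]
  fin_cases u <;> fin_cases v <;> first
    | exact absurd huv (by decide)
    | decide
end

section
/- Let π be chosen uniformly at random from T(D,D'), the set of permutations taking deck D to deck D'. Suppose D(1) = u and D(2) = v with u ≠ v, and let n_u, n_v be the numbers of cards with values u and v respectively. Then E[ω_1(π)] = Z(D',u,v)/(n_u·n_v), where ω_1(π) = 1 if π(1) < π(2) and ω_1(π) = -1 if π(1) > π(2). -/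
open scoped Classical

/-!
The map `π ↦ (π 1, π 2)` sends `T(D,D')` onto the pairs `(a, b)` of positions with
`D' a = u` and `D' b = v`, and all its fibres have the same size: left multiplication by
`swap a a' * swap b b'` preserves `D'` and carries the fibre over `(a, b)` onto the fibre over
`(a', b')`. Hence `π` uniform on `T(D,D')` makes `(π 1, π 2)` uniform on these `n_u n_v` pairs,
and `E[ω₁(π)]` counts the pairs with `a < b` minus those with `b < a`, which is `Z(D',u,v)`.
-/

open Finset Equiv

theorem card_filter_comp_eq_mul_of_card_fiber_eq {α β : Type*} [DecidableEq β]
    {s : Finset α} {t : Finset β} {f : α → β} (hf : Set.MapsTo f s t) {c : ℕ}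
    (hc : ∀ b ∈ t, #{a ∈ s | f a = b} = c) (R : β → Prop) [DecidablePred R] :
    #{a ∈ s | R (f a)} = #{b ∈ t | R b} * c := by
  rw [card_eq_sum_card_fiberwise (f := f) (t := {b ∈ t | R b})]
  · refine sum_const_nat fun b hb => ?_
    rw [mem_filter] at hb
    rw [← hc b hb.1, filter_filter]
    congr 1
    exact filter_congr fun a _ => ⟨And.right, fun h => ⟨h ▸ hb.2, h⟩⟩
  · intro a ha
    rw [coe_filter] at ha
    exact mem_filter.2 ⟨hf ha.1, ha.2⟩

theorem apply_swap_apply_of_apply_eq {ι V : Type*} [DecidableEq ι] {f : ι → V} {x y : ι}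
    (h : f x = f y) (z : ι) : f (swap x y z) = f z := by
  rw [swap_apply_def]
  split_ifs <;> simp_all

section Transports

variable {ι V : Type*} [DecidableEq ι] {D D' : ι → V}

theorem exists_perm_apply_eq_of_apply_ne {a b a' b' : ι} (ha : D' a' = D' a)
    (hb : D' b' = D' b) (hab : D' a ≠ D' b) :
    ∃ τ : Perm ι, (∀ x, D' (τ x) = D' x) ∧ τ a = a' ∧ τ b = b' := by
  refine ⟨swap a a' * swap b b', fun x => ?_, ?_, ?_⟩
  · simp only [Perm.mul_apply]
    rw [apply_swap_apply_of_apply_eq ha.symm, apply_swap_apply_of_apply_eq hb.symm]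
  · simp [swap_apply_of_ne_of_ne (ne_of_apply_ne D' hab) (ne_of_apply_ne D' (hb ▸ hab))]
  · simp [swap_apply_of_ne_of_ne (ne_of_apply_ne D' (hb ▸ hab)).symm
      (ne_of_apply_ne D' (ha ▸ hb ▸ hab)).symm]

variable [Fintype ι]

/-- The paper's `T(D,D')`. -/
noncomputable def transports (D D' : ι → V) : Finset (Perm ι) := {π | ∀ i, D' (π i) = D i}

theorem mem_transports {π : Perm ι} : π ∈ transports D D' ↔ ∀ i, D' (π i) = D i := by
  simp [transports]

theorem mul_mem_transports {τ π : Perm ι} (hτ : ∀ x, D' (τ x) = D' x)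
    (hπ : π ∈ transports D D') : τ * π ∈ transports D D' :=
  mem_transports.2 fun i => (hτ (π i)).trans (mem_transports.1 hπ i)

theorem card_transports_fiber_apply_eq {τ : Perm ι} (hτ : ∀ x, D' (τ x) = D' x)
    (i j a b : ι) :
    #{π ∈ transports D D' | (π i, π j) = (τ a, τ b)} =
      #{π ∈ transports D D' | (π i, π j) = (a, b)} := by
  have hτ' : ∀ x, D' (τ⁻¹ x) = D' x := fun x => by
    simpa using (hτ (τ⁻¹ x)).symm
  refine card_nbij' (τ⁻¹ * ·) (τ * ·) ?_ ?_ ?_ ?_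
  · intro π hπ
    simp only [coe_filter, Set.mem_ofPred_eq, Prod.mk.injEq] at hπ ⊢
    refine ⟨mul_mem_transports hτ' hπ.1, ?_, ?_⟩ <;> simp [hπ.2]
  · intro π hπ
    simp only [coe_filter, Set.mem_ofPred_eq, Prod.mk.injEq] at hπ ⊢
    refine ⟨mul_mem_transports hτ hπ.1, ?_, ?_⟩ <;> simp [hπ.2]
  · intro π _
    simp
  · intro π _
    simp

theorem card_transports_filter_eq_mul {σ : Perm ι} (hσ : σ ∈ transports D D') {i j : ι}
    (hij : D i ≠ D j) (R : ι → ι → Prop) [DecidableRel R] :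
    #{π ∈ transports D D' | R (π i) (π j)} =
      #{p ∈ ({a | D' a = D i} : Finset ι) ×ˢ ({b | D' b = D j} : Finset ι) | R p.1 p.2} *
        #{π ∈ transports D D' | (π i, π j) = (σ i, σ j)} := by
  have hσi := mem_transports.1 hσ
  refine card_filter_comp_eq_mul_of_card_fiber_eq (f := fun π : Perm ι => (π i, π j))
    (fun π hπ => ?_) (fun p hp => ?_) fun p : ι × ι => R p.1 p.2
  · have hπi := mem_transports.1 (mem_coe.1 hπ)
    simp [hπi]
  · obtain ⟨a, b⟩ := p
    simp only [mem_product, mem_filter, mem_univ, true_and] at hp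
    obtain ⟨τ, hτ, rfl, rfl⟩ := exists_perm_apply_eq_of_apply_ne (D' := D')
      (a := σ i) (b := σ j) (hp.1.trans (hσi i).symm) (hp.2.trans (hσi j).symm)
      (by rwa [hσi, hσi])
    exact card_transports_fiber_apply_eq hτ i j (σ i) (σ j)

end Transports

theorem Zpair_eq_card_sub_card {n : ℕ} {V : Type*} (D' : Fin n → V) (u v : V) :
    Zpair D' u v =
      (#{p ∈ ({a | D' a = u} : Finset (Fin n)) ×ˢ ({b | D' b = v} : Finset (Fin n)) |
          p.1 < p.2} : ℤ) -
        #{p ∈ ({a | D' a = u} : Finset (Fin n)) ×ˢ ({b | D' b = v} : Finset (Fin n)) |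
          p.2 < p.1} := by
  rw [Zpair]
  congr 2
  · congr 1
    ext p
    simp only [mem_filter, mem_product, mem_univ, true_and]
    tauto
  · refine card_nbij' Prod.swap Prod.swap ?_ ?_ (fun _ _ => rfl) (fun _ _ => rfl) <;>
      · intro p hp
        simp only [coe_filter, mem_product, mem_filter, mem_univ, true_and, Set.mem_ofPred_eq,
          Prod.fst_swap, Prod.snd_swap] at hp ⊢
        tauto

/-- If `D(1) = u ≠ v = D(2)`, then for `π` uniform on `T(D,D')`,
`E[ω₁(π)] = Z(D',u,v)/(n_u·n_v)`. -/
theorem expectation_omega_ne (n : ℕ) (hn : 2 ≤ n) {V : Type*} (D D' : Fin n → V)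
    (σ : Equiv.Perm (Fin n)) (hD' : D' = D ∘ ⇑σ.symm) (u v : V)
    (hu : D ⟨0, by omega⟩ = u) (hv : D ⟨1, by omega⟩ = v) (huv : u ≠ v) :
    (((Finset.univ.filter (fun π : Equiv.Perm (Fin n) =>
          (∀ i, D' (π i) = D i) ∧ π ⟨0, by omega⟩ < π ⟨1, by omega⟩)).card : ℚ) -
      ((Finset.univ.filter (fun π : Equiv.Perm (Fin n) =>
          (∀ i, D' (π i) = D i) ∧ π ⟨1, by omega⟩ < π ⟨0, by omega⟩)).card : ℚ)) /
      ((Finset.univ.filter (fun π : Equiv.Perm (Fin n) =>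
          ∀ i, D' (π i) = D i)).card : ℚ) =
    (Zpair D' u v : ℚ) /
      (((Finset.univ.filter (fun i : Fin n => D' i = u)).card : ℚ) *
        ((Finset.univ.filter (fun i : Fin n => D' i = v)).card : ℚ)) := by
  set i : Fin n := ⟨0, by omega⟩
  set j : Fin n := ⟨1, by omega⟩
  have hσ : σ ∈ transports D D' := mem_transports.2 fun k => by simp [hD']
  subst hu hv
  have count := card_transports_filter_eq_mul hσ huv
  set c := #{π ∈ transports D D' | (π i, π j) = (σ i, σ j)}
  have hc : (c : ℚ) ≠ 0 := Nat.cast_ne_zero.2 (card_ne_zero.2 ⟨σ, by simp [hσ]⟩)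
  suffices key : ((#{π ∈ transports D D' | π i < π j} : ℚ) -
      #{π ∈ transports D D' | π j < π i}) / #(transports D D') =
      (Zpair D' (D i) (D j) : ℚ) / (#{a | D' a = D i} * #{b | D' b = D j}) by
    -- the statement's filters carry other decidability instances than `transports`
    convert key using 5 <;>
    · ext π
      simp [mem_transports]
  have hall := count fun _ _ => True
  rw [filter_true, filter_true] at hall
  rw [Zpair_eq_card_sub_card, count (· < ·), count fun a b => b < a, hall, card_product]
  push_cast
  rw [← sub_mul, mul_div_mul_right _ _ hc]
end

section
/- For a deck D of n distinct cards (so N = n! reorderings), the first-order variation distance coefficient satisfies κ_1(D) = (n/(4·n!)) · Σ_{d=0}^{n-1} A(n,d)·|n-1-2d|, where A(n,d) is the Eulerian number. Equivalently, (1/2)·Σ_{π ∈ S_n} |c_1(D, πD)| = (n/(4·n!))·Σ_{π ∈ S_n} |asc(π) − des(π)|. -/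
open scoped Classical

/-- Number of descents of a permutation of `Fin n`. -/
noncomputable def des {n : ℕ} (π : Equiv.Perm (Fin n)) : ℕ :=
  (Finset.univ.filter
    (fun i : Fin n => ∃ h : i.1 + 1 < n, π i > π ⟨i.1 + 1, h⟩)).card

/-!
For the deck `D = (1, …, n)` the only digraphs are `(i, i+1)`, so for `u < v` the weight
`W(D, u, v)` is the indicator of `v = u + 1`. In the deck `π⁻¹D` card `u` sits at position `π u`,
so `Z(π⁻¹D, i, i+1) = ±1` according as `π` has an ascent or a descent at `i`. Hence
`c₁(D, π⁻¹D) = n/(2·n!) · (asc π - des π) = n/(2·n!) · (n - 1 - 2 des π)`, and grouping the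
permutations by their number of descents turns `∑_π |n - 1 - 2 des π|` into the Eulerian sum.
-/

open Finset

section
variable {n : ℕ} {V : Type*}

noncomputable def digraphCount (D : Fin n → V) (u v : V) : ℕ :=
  #{i : Fin n | ∃ h : i.1 + 1 < n, D i = u ∧ D ⟨i.1 + 1, h⟩ = v}

noncomputable def pairCount (D : Fin n → V) (u v : V) : ℕ :=
  #{p : Fin n × Fin n | p.1 < p.2 ∧ D p.1 = u ∧ D p.2 = v}

lemma Wdig_eq (D : Fin n → V) (u v : V) :
    Wdig D u v = digraphCount D u v - digraphCount D v u := rfl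

lemma Zpair_eq (D : Fin n → V) (u v : V) :
    Zpair D u v = pairCount D u v - pairCount D v u := rfl

end

section
variable {n : ℕ}

lemma digraphCount_id (u v : Fin n) :
    digraphCount id u v = if v.1 = u.1 + 1 then 1 else 0 := by
  -- the filter was elaborated with classical equality on a general `V`
  rw [digraphCount, filter_congr_decidable]
  split_ifs with huv
  · refine card_eq_one.2 ⟨u, ?_⟩
    ext i
    simp only [mem_filter, mem_univ, true_and, mem_singleton, id_eq]
    constructor
    · rintro ⟨-, rfl, -⟩
      rfl
    · rintro rfl
      exact ⟨huv ▸ v.2, rfl, Fin.ext huv.symm⟩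
  · rw [card_eq_zero, filter_eq_empty_iff]
    rintro i - ⟨h, rfl, rfl⟩
    exact huv rfl

lemma Wdig_id_of_lt {u v : Fin n} (huv : u < v) :
    Wdig id u v = if v.1 = u.1 + 1 then 1 else 0 := by
  rw [Wdig_eq, digraphCount_id, digraphCount_id, if_neg (show ¬ u.1 = v.1 + 1 by omega)]
  simp

lemma pairCount_perm_symm (π : Equiv.Perm (Fin n)) (u v : Fin n) :
    pairCount (fun i => π.symm i) u v = if π u < π v then 1 else 0 := by
  rw [pairCount, filter_congr_decidable]
  split_ifs with huv
  · refine card_eq_one.2 ⟨(π u, π v), ?_⟩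
    ext ⟨i, j⟩
    simp only [mem_filter, mem_univ, true_and, mem_singleton, Prod.mk.injEq, Equiv.symm_apply_eq]
    constructor
    · rintro ⟨-, rfl, rfl⟩
      exact ⟨rfl, rfl⟩
    · rintro ⟨rfl, rfl⟩
      exact ⟨huv, rfl, rfl⟩
  · rw [card_eq_zero, filter_eq_empty_iff]
    rintro ⟨i, j⟩ - ⟨hij, rfl, rfl⟩
    simp only [Equiv.apply_symm_apply] at huv
    exact huv hij

lemma Zpair_perm_symm_of_ne (π : Equiv.Perm (Fin n)) {u v : Fin n} (huv : u ≠ v) :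
    Zpair (fun i => π.symm i) u v = if π v < π u then -1 else 1 := by
  rw [Zpair_eq, pairCount_perm_symm, pairCount_perm_symm]
  rcases lt_or_gt_of_ne (π.injective.ne huv) with h | h
  · simp [h, h.not_gt]
  · simp [h, h.not_gt]

def adjacentPairs (n : ℕ) : Finset (Fin n × Fin n) := {p | p.2.1 = p.1.1 + 1}

lemma adjacentPairs_subset_filter_lt :
    adjacentPairs n ⊆ univ.filter (fun p : Fin n × Fin n => p.1 < p.2) := by
  intro p hp
  simp only [adjacentPairs, mem_filter, mem_univ, true_and] at hp ⊢
  exact Fin.lt_def.2 (by omega)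

lemma card_filter_adjacentPairs (P : Fin n → Fin n → Prop) [DecidableRel P] :
    #{p ∈ adjacentPairs n | P p.1 p.2} = #{i : Fin n | ∃ h : i.1 + 1 < n, P i ⟨i.1 + 1, h⟩} := by
  refine card_nbij Prod.fst ?_ ?_ ?_
  · rintro ⟨i, j⟩ hij
    simp only [adjacentPairs, mem_coe, mem_filter, mem_univ, true_and] at hij ⊢
    obtain ⟨hj, hP⟩ := hij
    have hi : i.1 + 1 < n := hj ▸ j.2
    obtain rfl : j = ⟨i.1 + 1, hi⟩ := Fin.ext hj
    exact ⟨hi, hP⟩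
  · rintro ⟨i, j⟩ hij ⟨i', j'⟩ hij' (rfl : i = i')
    simp only [adjacentPairs, mem_coe, mem_filter, mem_univ, true_and] at hij hij'
    exact Prod.ext rfl (Fin.ext (hij.1.trans hij'.1.symm))
  · intro i hi
    simp only [mem_coe, mem_filter, mem_univ, true_and] at hi
    obtain ⟨h, hP⟩ := hi
    exact ⟨(i, ⟨i.1 + 1, h⟩), by simp [adjacentPairs, hP], rfl⟩

lemma card_adjacentPairs : #(adjacentPairs n) = n - 1 := by
  have h := card_filter_adjacentPairs (n := n) fun _ _ => True
  simp only [filter_true, exists_prop, and_true] at h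
  rw [h]
  simpa [Nat.lt_sub_iff_add_lt] using Fin.card_filter_val_lt (n := n) (m := n - 1)

lemma des_eq_card_filter_adjacentPairs (π : Equiv.Perm (Fin n)) :
    des π = #{p ∈ adjacentPairs n | π p.2 < π p.1} :=
  (card_filter_adjacentPairs fun i j => π j < π i).symm

lemma des_le (π : Equiv.Perm (Fin n)) : des π ≤ n - 1 := by
  rw [des_eq_card_filter_adjacentPairs, ← card_adjacentPairs]
  exact card_filter_le _ _

lemma sum_Wdig_id_mul_Zpair_perm_symm (π : Equiv.Perm (Fin n)) :
    ∑ p ∈ univ.filter (fun p : Fin n × Fin n => p.1 < p.2),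
        (Wdig (id : Fin n → Fin n) p.1 p.2 : ℝ) * (Zpair (fun i => π.symm i) p.1 p.2 : ℝ) =
      ((n - 1 : ℕ) : ℝ) - 2 * des π := by
  calc _ = ∑ p ∈ adjacentPairs n,
        (Wdig (id : Fin n → Fin n) p.1 p.2 : ℝ) * (Zpair (fun i => π.symm i) p.1 p.2 : ℝ) := by
        refine (sum_subset adjacentPairs_subset_filter_lt fun p hlt hadj => ?_).symm
        simp only [adjacentPairs, mem_filter, mem_univ, true_and] at hlt hadj
        simp [Wdig_id_of_lt hlt, hadj]
    _ = ∑ p ∈ adjacentPairs n, (1 - 2 * if π p.2 < π p.1 then 1 else 0 : ℝ) := by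
        refine sum_congr rfl fun p hp => ?_
        have hlt := adjacentPairs_subset_filter_lt hp
        simp only [adjacentPairs, mem_filter, mem_univ, true_and] at hlt hp
        rw [Wdig_id_of_lt hlt, Zpair_perm_symm_of_ne π hlt.ne, if_pos hp]
        split_ifs <;> norm_num
    _ = _ := by
        rw [sum_sub_distrib, sum_const, ← mul_sum, sum_boole, card_adjacentPairs,
          des_eq_card_filter_adjacentPairs, nsmul_one]

end

lemma Finset.sum_comp_eq_sum_card_fiber_mul {ι κ R : Type*} [Fintype ι] [DecidableEq κ]
    [CommSemiring R] {g : ι → κ} {t : Finset κ} (hg : ∀ i, g i ∈ t) (f : κ → R) :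
    ∑ i, f (g i) = ∑ k ∈ t, #{i | g i = k} * f k := by
  rw [← sum_fiberwise_of_maps_to' fun i _ => hg i]
  simp only [sum_const, nsmul_eq_mul]

/-- For the deck `D = (1,2,...,n)` of distinct cards,
`κ₁(D) = (1/2)·∑_{π ∈ Sₙ} |c₁(D, πD)| = (n/(4·n!))·∑_d A(n,d)·|n-1-2d|`,
where `A(n,d)` is the Eulerian number and, for the all-distinct deck,
`c₁(D,D') = (n/(2·n!)) ∑_{u<v} W(D,u,v)·Z(D',u,v)`. -/
theorem kappa1_all_distinct (n : ℕ) (hn : 1 ≤ n) :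
    (1 / 2 : ℝ) * ∑ π : Equiv.Perm (Fin n),
        |((n : ℝ) / (2 * (n.factorial : ℝ))) *
          ∑ p ∈ Finset.univ.filter (fun p : Fin n × Fin n => p.1 < p.2),
            (Wdig (id : Fin n → Fin n) p.1 p.2 : ℝ) *
              (Zpair (fun i => π.symm i) p.1 p.2 : ℝ)| =
      ((n : ℝ) / (4 * (n.factorial : ℝ))) *
        ∑ d ∈ Finset.range n,
          ((Finset.univ.filter
              (fun π : Equiv.Perm (Fin n) => des π = d)).card : ℝ) *
            |(n : ℝ) - 1 - 2 * (d : ℝ)| := by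
  have hcoef : 0 ≤ (n : ℝ) / (2 * n.factorial) := by positivity
  have hdes (π : Equiv.Perm (Fin n)) : des π ∈ range n := mem_range.2 (by have := des_le π; omega)
  simp_rw [sum_Wdig_id_mul_Zpair_perm_symm, abs_mul, abs_of_nonneg hcoef, Nat.cast_pred hn]
  rw [← mul_sum, ← sum_comp_eq_sum_card_fiber_mul hdes fun d : ℕ => |(n : ℝ) - 1 - 2 * d|]
  ring
end
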